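/- arXiv:2009.02407 — 4 statements merged into one kernel-verified Lean document; each statement's English description precedes it below -/
import Mathlib

section
/- Let V be a nonzero normed space, X a nonzero Banach space, and E a reasonable sequence space of X-valued sequences. Let v : V → E be a nonzero continuous linear operator and suppose there exists j₀ ∈ ℕ with π_{j₀} ∘ v = 0. Then the subspace N = {u ∈ L(V, E) : π_{j₀} ∘ u = 0} consists of non-surjective operators, contains v, and has dimension at least continuum. -/
/-!
Fix unit vectors `eₙ` supported at the coordinates `j₀ + n + 1`. For `t ∈ (0, 1)` the vectors
`g t = ∑ tⁿ eₙ` have vanishing `j₀`-th coordinate, and reading off their later coordinates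
yields the geometric sequences `(tⁿ)ₙ`, which are linearly independent as distinct characters
of `(ℕ, +)`. So the kernel `K` of the `j₀`-th coordinate has dimension at least `𝔠`, and for a
nonzero functional `φ` on `V` the operators `φ(·) y`, `y ∈ K`, embed `K` into `N`. No `u ∈ N`
is onto, as its range misses every vector with nonzero `j₀`-th coordinate.
-/

theorem linearIndependent_pow_seq (K : Type*) [CommRing K] [IsDomain K] :
    LinearIndependent K (fun (t : K) (n : ℕ) => t ^ n) :=
  (linearIndependent_monoidHom (Multiplicative ℕ) K).comp (powersHom K)
    (powersHom K).injective

namespace SequenceSpace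

variable {X E : Type*} [NormedAddCommGroup X] [NormedSpace ℝ X]
  [NormedAddCommGroup E] [NormedSpace ℝ E] {coord : E →ₗ[ℝ] (ℕ → X)}

def BoundedMultipliers (coord : E →ₗ[ℝ] (ℕ → X)) : Prop :=
  ∀ (α : ℕ → ℝ) (C : ℝ), (∀ n, |α n| ≤ C) → ∀ x : E,
    ∃ y : E, coord y = (fun n => α n • coord x n) ∧ ‖y‖ ≤ C * ‖x‖

theorem exists_clm_coord_eq_smul (hinj : Function.Injective coord)
    (hmul : BoundedMultipliers coord) {α : ℕ → ℝ} {C : ℝ} (hα : ∀ n, |α n| ≤ C) :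
    ∃ M : E →L[ℝ] E, ∀ x, coord (M x) = α • coord x := by
  choose M hMcoord hMnorm using hmul α C hα
  have hM : ∀ x, coord (M x) = α • coord x := hMcoord
  let M' : E →ₗ[ℝ] E :=
    { toFun := M
      map_add' x y := hinj <| by simp only [hM, map_add, smul_add]
      map_smul' c x := hinj <| by simp only [hM, map_smul, RingHom.id_apply, smul_comm α c] }
  exact ⟨M'.mkContinuous C hMnorm, hM⟩

theorem exists_clm_coord_eq_single (hinj : Function.Injective coord)
    (hmul : BoundedMultipliers coord) (k : ℕ) :
    ∃ P : E →L[ℝ] E, ∀ x, coord (P x) = Pi.single k (coord x k) := by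
  have hα : ∀ n, |(Pi.single k 1 : ℕ → ℝ) n| ≤ 1 := fun n => by
    rcases eq_or_ne n k with rfl | h <;> simp [*]
  obtain ⟨P, hP⟩ := exists_clm_coord_eq_smul hinj hmul hα
  refine ⟨P, fun x => ?_⟩
  ext n
  rcases eq_or_ne n k with rfl | h <;> simp [*]

/-- `coord` need not be continuous; the continuous projection onto coordinate `k` stands in. -/
theorem coord_tsum_apply (hinj : Function.Injective coord) (hmul : BoundedMultipliers coord)
    {y : ℕ → E} (hy : Summable y) {k m : ℕ} (hk : ∀ n ≠ m, coord (y n) k = 0) :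
    coord (∑' n, y n) k = coord (y m) k := by
  obtain ⟨P, hP⟩ := exists_clm_coord_eq_single hinj hmul k
  have hPy : ∀ n ≠ m, P (y n) = 0 := fun n hn => hinj <| by simp [hP, hk n hn]
  have : P (∑' n, y n) = P (y m) := by
    rw [P.map_tsum hy, tsum_eq_single m hPy]
  simpa [hP] using congr(coord $this k)

theorem exists_norm_eq_one_coord_eq_single [Nontrivial X]
    (hc00 : ∀ f : ℕ → X, (Function.support f).Finite → f ∈ Set.range coord) (k : ℕ) :
    ∃ (e : E) (ξ : X), ξ ≠ 0 ∧ ‖e‖ = 1 ∧ coord e = Pi.single k ξ := by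
  obtain ⟨ξ, hξ⟩ := exists_ne (0 : X)
  obtain ⟨e, he⟩ := hc00 (Pi.single k ξ) ((Set.finite_singleton k).subset Pi.support_single_subset)
  have he0 : e ≠ 0 := by rintro rfl; simpa [hξ] using congr($he k).symm
  refine ⟨‖e‖⁻¹ • e, ‖e‖⁻¹ • ξ, smul_ne_zero (by simpa using he0) hξ, ?_, ?_⟩
  · rw [norm_smul, norm_inv, norm_norm, inv_mul_cancel₀ (norm_ne_zero_iff.2 he0)]
  · rw [map_smul, he, Pi.single_smul]

theorem continuum_le_rank_ker_coord [CompleteSpace E] [Nontrivial X]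
    (hinj : Function.Injective coord) (hmul : BoundedMultipliers coord)
    (hc00 : ∀ f : ℕ → X, (Function.support f).Finite → f ∈ Set.range coord) (j₀ : ℕ) :
    Cardinal.continuum ≤ Module.rank ℝ (LinearMap.ker (LinearMap.proj j₀ ∘ₗ coord)) := by
  choose e ξ hξ he hce using fun n => exists_norm_eq_one_coord_eq_single hc00 (j₀ + n + 1)
  choose ψ hψ using fun n => SeparatingDual.exists_eq_one (R := ℝ) (hξ n)
  let g : ℝ → E := fun t => ∑' n, t ^ n • e n
  have hsum : ∀ t : Set.Ioo (0 : ℝ) 1, Summable fun n => (t : ℝ) ^ n • e n := fun t =>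
    (summable_geometric_of_lt_one t.2.1.le t.2.2).of_norm_bounded fun n => by
      simp [norm_smul, he, abs_of_pos t.2.1]
  have hg₀ : ∀ t : Set.Ioo (0 : ℝ) 1, coord (g t) j₀ = 0 := fun t => by
    have he₀ : ∀ n, coord (e n) j₀ = 0 := fun n => by
      rw [hce]; exact Pi.single_eq_of_ne (by omega) _
    rw [coord_tsum_apply hinj hmul (hsum t) (m := 0)] <;> simp [he₀]
  have hg : ∀ (t : Set.Ioo (0 : ℝ) 1) m, coord (g t) (j₀ + m + 1) = (t : ℝ) ^ m • ξ m :=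
    fun t m => by
      rw [coord_tsum_apply hinj hmul (hsum t) (m := m)]
      · simp [hce]
      · intro n hn; simp [hce, hn]
  let F : E →ₗ[ℝ] (ℕ → ℝ) :=
    LinearMap.pi fun n => (ψ n).toLinearMap ∘ₗ LinearMap.proj (j₀ + n + 1) ∘ₗ coord
  have hli : LinearIndependent ℝ fun t : Set.Ioo (0 : ℝ) 1 =>
      (⟨g t, hg₀ t⟩ : LinearMap.ker (LinearMap.proj j₀ ∘ₗ coord)) := by
    refine .of_comp (F ∘ₗ Submodule.subtype _) ?_
    have hFg : (F ∘ₗ Submodule.subtype _) ∘ (fun t : Set.Ioo (0 : ℝ) 1 =>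
        (⟨g t, hg₀ t⟩ : LinearMap.ker (LinearMap.proj j₀ ∘ₗ coord))) =
        (fun (t : ℝ) (n : ℕ) => t ^ n) ∘ Subtype.val := by
      ext t n
      simp [F, hg, hψ]
    rw [hFg]
    exact (linearIndependent_pow_seq ℝ).comp _ Subtype.val_injective
  simpa [Cardinal.mk_Ioo_real] using hli.cardinal_lift_le_rank

end SequenceSpace

section ClmInto

universe u v

variable {𝕜 : Type*} {E : Type v} {V : Type u} [RCLike 𝕜] [NormedAddCommGroup V] [NormedSpace 𝕜 V]
  [NormedAddCommGroup E] [NormedSpace 𝕜 E]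

variable (V) in
def Submodule.clmInto (K : Submodule 𝕜 E) : Submodule 𝕜 (V →L[𝕜] E) where
  carrier := {u | ∀ x, u x ∈ K}
  add_mem' ha hb x := K.add_mem (ha x) (hb x)
  zero_mem' _ := K.zero_mem
  smul_mem' c _ hu x := K.smul_mem c (hu x)

theorem Submodule.rank_le_rank_clmInto [Nontrivial V] (K : Submodule 𝕜 E) :
    Cardinal.lift.{u} (Module.rank 𝕜 K) ≤ Module.rank 𝕜 (K.clmInto V) := by
  obtain ⟨x₀, hx₀⟩ := exists_ne (0 : V)
  obtain ⟨φ, hφ⟩ := SeparatingDual.exists_eq_one (R := 𝕜) hx₀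
  let L : K →ₗ[𝕜] K.clmInto V :=
    { toFun y := ⟨φ.smulRight (y : E), fun x => K.smul_mem (φ x) y.2⟩
      map_add' y z := by ext; simp
      map_smul' c y := by ext; simp [smul_comm (φ _) c] }
  have hL : Function.Injective L := fun y z h => by
    simpa [L, hφ] using congrArg (fun w : K.clmInto V => (w : V →L[𝕜] E) x₀) h
  have := L.lift_rank_le_of_injective hL
  rwa [Cardinal.lift_umax.{v, u}, Cardinal.lift_id'.{v, u}] at this

theorem Submodule.not_surjective_of_mem_clmInto {K : Submodule 𝕜 E} (hK : K ≠ ⊤)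
    {u : V →L[𝕜] E} (hu : u ∈ K.clmInto V) : ¬ Function.Surjective u := fun hsurj =>
  hK <| K.eq_top_iff'.2 fun y => by obtain ⟨x, rfl⟩ := hsurj y; exact hu x

end ClmInto

theorem stmt3_general {V X E : Type*}
    [NormedAddCommGroup V] [NormedSpace ℝ V] [Nontrivial V]
    [NormedAddCommGroup X] [NormedSpace ℝ X] [Nontrivial X]
    [NormedAddCommGroup E] [NormedSpace ℝ E] [CompleteSpace E]
    (coord : E →ₗ[ℝ] (ℕ → X))
    (hinj : Function.Injective coord)
    (hc00 : ∀ f : ℕ → X, (Function.support f).Finite → f ∈ Set.range coord)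
    (hmul : ∀ (α : ℕ → ℝ) (C : ℝ), (∀ n, |α n| ≤ C) → ∀ x : E,
      ∃ y : E, coord y = (fun n => α n • coord x n) ∧ ‖y‖ ≤ C * ‖x‖)
    (v : V →L[ℝ] E) (j₀ : ℕ) (hj : ∀ x, coord (v x) j₀ = 0) :
    ∃ N : Submodule ℝ (V →L[ℝ] E),
      (N : Set (V →L[ℝ] E)) = {u | ∀ x, coord (u x) j₀ = 0} ∧
      v ∈ N ∧ (∀ u ∈ N, ¬ Function.Surjective ⇑u) ∧
      Cardinal.continuum ≤ Module.rank ℝ N := by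
  set K := LinearMap.ker (LinearMap.proj j₀ ∘ₗ coord)
  have hK : K ≠ ⊤ := by
    obtain ⟨e, ξ, hξ, -, he⟩ := SequenceSpace.exists_norm_eq_one_coord_eq_single hc00 j₀
    intro h
    have : e ∈ K := h ▸ Submodule.mem_top
    exact hξ (by simpa [K, he] using this)
  refine ⟨K.clmInto V, rfl, hj, fun u hu => K.not_surjective_of_mem_clmInto hK hu, ?_⟩
  calc Cardinal.continuum
      = Cardinal.lift Cardinal.continuum := Cardinal.lift_continuum.symm
    _ ≤ Cardinal.lift (Module.rank ℝ K) :=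
      Cardinal.lift_le.2 (SequenceSpace.continuum_le_rank_ker_coord hinj hmul hc00 j₀)
    _ ≤ Module.rank ℝ (K.clmInto V) := K.rank_le_rank_clmInto

/-- If v : V → E is nonzero continuous linear and some coordinate j₀ of v
vanishes identically, then N = {u ∈ L(V,E) : π_{j₀} ∘ u = 0} consists of non-surjective
operators, contains v, and has dimension at least continuum. -/
theorem stmt3 {V X E : Type*}
    [NormedAddCommGroup V] [NormedSpace ℝ V] [Nontrivial V]
    [NormedAddCommGroup X] [NormedSpace ℝ X] [CompleteSpace X] [Nontrivial X]
    [NormedAddCommGroup E] [NormedSpace ℝ E] [CompleteSpace E]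
    (coord : E →ₗ[ℝ] (ℕ → X))
    (hinj : Function.Injective coord)
    (hc00 : ∀ f : ℕ → X, (Function.support f).Finite → f ∈ Set.range coord)
    (hmul : ∀ (α : ℕ → ℝ) (C : ℝ), (∀ n, |α n| ≤ C) → ∀ x : E,
      ∃ y : E, coord y = (fun n => α n • coord x n) ∧ ‖y‖ ≤ C * ‖x‖)
    (v : V →L[ℝ] E) (hv : v ≠ 0) (j₀ : ℕ) (hj : ∀ x, coord (v x) j₀ = 0) :
    ∃ N : Submodule ℝ (V →L[ℝ] E),
      (N : Set (V →L[ℝ] E)) = {u | ∀ x, coord (u x) j₀ = 0} ∧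
      v ∈ N ∧ (∀ u ∈ N, ¬ Function.Surjective ⇑u) ∧
      Cardinal.continuum ≤ Module.rank ℝ N :=
  stmt3_general coord hinj hc00 hmul v j₀ hj
end

section
/- Let E be a reasonable sequence space of X-valued sequences, V a normed space, and v : V → E a continuous linear operator such that π_k ∘ v ≠ 0 for every k ∈ ℕ. Then the linear map Λ : ℓ_∞ → L(V, E), Λ((μ_n)) = S^v_{(μ_n)} where S^v_{(μ_n)}(x) = (μ_n (v(x))_n), is injective; consequently Λ(ℓ_∞) is a subspace of L(V, E) of dimension continuum containing v. -/
/-- If every coordinate of v is not identically zero, then the linear map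
Λ : ℓ_∞ → L(V,E), Λ(μ) = S^v_μ, is injective; hence Λ(ℓ_∞) is a subspace of L(V,E) of
dimension continuum containing v = Λ((1,1,1,…)). -/
theorem stmt6 {V X E : Type*}
    [NormedAddCommGroup V] [NormedSpace ℝ V]
    [NormedAddCommGroup X] [NormedSpace ℝ X] [CompleteSpace X]
    [NormedAddCommGroup E] [NormedSpace ℝ E] [CompleteSpace E]
    (coord : E →ₗ[ℝ] (ℕ → X))
    (hinj : Function.Injective coord)
    (hc00 : ∀ f : ℕ → X, (Function.support f).Finite → f ∈ Set.range coord)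
    (hmul : ∀ (α : ℕ → ℝ) (C : ℝ), (∀ n, |α n| ≤ C) → ∀ x : E,
      ∃ y : E, coord y = (fun n => α n • coord x n) ∧ ‖y‖ ≤ C * ‖x‖)
    (v : V →L[ℝ] E) (hv : ∀ k : ℕ, ∃ x : V, coord (v x) k ≠ 0)
    (Λ : lp (fun _ : ℕ => ℝ) ⊤ →ₗ[ℝ] (V →L[ℝ] E))
    (hΛ : ∀ (μ : lp (fun _ : ℕ => ℝ) ⊤) (x : V),
      coord (Λ μ x) = fun n => (μ n : ℝ) • coord (v x) n) :
    Function.Injective ⇑Λ ∧ v ∈ LinearMap.range Λ ∧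
      Module.rank ℝ (LinearMap.range Λ) = Cardinal.continuum := by
  set L := lp (fun _ : ℕ => ℝ) ⊤ with hL
  -- injectivity
  have hker : ∀ μ : L, Λ μ = 0 → μ = 0 := by
    intro μ h
    apply lp.ext
    funext n
    obtain ⟨x, hx⟩ := hv n
    have h1 := congrFun (hΛ μ x) n
    rw [h, ContinuousLinearMap.zero_apply, map_zero] at h1
    have h2 : (0 : X) = μ n • coord (v x) n := h1
    rcases smul_eq_zero.mp h2.symm with h3 | h3
    · exact h3
    · exact absurd h3 hx
  have hinjΛ : Function.Injective ⇑Λ := by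
    intro a b hab
    have : Λ (a - b) = 0 := by rw [map_sub, hab, sub_self]
    have := hker _ this
    rwa [sub_eq_zero] at this
  refine ⟨hinjΛ, ?_, ?_⟩
  · -- v = Λ(1,1,1,...)
    have hmem : Memℓp (fun _ : ℕ => (1 : ℝ)) ⊤ := memℓp_infty ⟨1, by
      rintro x ⟨n, rfl⟩; simp⟩
    refine ⟨⟨_, hmem⟩, ?_⟩
    ext x
    apply hinj
    rw [hΛ]
    funext n
    show (1 : ℝ) • coord (v x) n = coord (v x) n
    rw [one_smul]
  · -- rank
    have hrank : Module.rank ℝ L = Cardinal.continuum := by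
      apply le_antisymm
      · calc Module.rank ℝ L ≤ Cardinal.mk L := rank_le_card _ _
          _ ≤ Cardinal.mk (ℕ → ℝ) := Cardinal.mk_le_of_injective (f := fun f : L => ⇑f)
              (fun a b hab => lp.ext hab)
          _ = Cardinal.continuum := by
              rw [Cardinal.mk_arrow]
              simp [Cardinal.mk_real, Cardinal.continuum_power_aleph0]
      · -- a continuum-sized linearly independent family: geometric sequences
        have hmem : ∀ r : Set.Ioo (0:ℝ) 1, Memℓp (fun n : ℕ => (r : ℝ) ^ n) ⊤ := by
          intro r
          refine memℓp_infty ⟨1, ?_⟩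
          rintro x ⟨n, rfl⟩
          have h0 : (0:ℝ) ≤ (r:ℝ) := le_of_lt r.2.1
          have h1 : (r:ℝ) ≤ 1 := le_of_lt r.2.2
          simp only [Real.norm_eq_abs, abs_pow, abs_of_nonneg h0]
          exact pow_le_one₀ h0 h1
        set b : Set.Ioo (0:ℝ) 1 → L := fun r => ⟨fun n : ℕ => (r : ℝ) ^ n, hmem r⟩ with hb
        let coeL : L →ₗ[ℝ] (ℕ → ℝ) :=
          { toFun := fun f => ⇑f
            map_add' := fun f g => lp.coeFn_add f g
            map_smul' := fun c f => lp.coeFn_smul c f }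
        have li0 : LinearIndependent ℝ (M := Multiplicative ℕ → ℝ)
            (fun f : (Multiplicative ℕ →* ℝ) => ⇑f) := linearIndependent_monoidHom _ _
        have li1 : LinearIndependent ℝ
            (fun r : Set.Ioo (0:ℝ) 1 => ⇑(powersHom ℝ (r : ℝ))) :=
          li0.comp _ ((powersHom ℝ).injective.comp Subtype.val_injective)
        have lib : LinearIndependent ℝ b := by
          apply LinearIndependent.of_comp coeL
          exact li1
        have := lib.cardinal_le_rank
        rwa [Cardinal.mk_Ioo_real zero_lt_one] at this
    have h2 := lift_rank_range_of_injective Λ hinjΛ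
    rw [hrank, Cardinal.lift_continuum] at h2
    simpa using h2
end

section
/- Let V ≠ {0} be a normed vector space, X ≠ {0} a Banach space, and E a reasonable sequence space of X-valued sequences. The set D_{V,E} of continuous linear non-surjective operators u : V → E is (1, 𝔠)-lineable in L(V, E): for every nonzero v ∈ D_{V,E} there exists a linear subspace W of L(V, E) with dim W = 𝔠, v ∈ W, and W ⊆ D_{V,E} ∪ {0}. -/
/-!
The ℓ_∞-module property makes the coordinate projections `P n` bounded operators on `E`. For
normalized unit vectors `u n` the series `y t = ∑ tⁿ • u n` (`0 < t < 1`) converge in the Banach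
space `E` and `P n (y t) = tⁿ • u n`; since distinct geometric sequences are linearly independent,
so are the `y t`, and `E` has Hamel dimension at least `𝔠`.

The range of the non-surjective `v` lies in the kernel `H` of a nonzero functional `g`, and `H`
still has dimension at least `𝔠`. For a fixed nonzero `f ∈ V'`, the operators `x ↦ f x • a`
(`a ∈ H`) show that the operators with range in `H` form a space of dimension at least `𝔠`. It
contains `v`, and none of its elements is surjective since `H ≠ E`; any `𝔠`-dimensional
subspace of it containing `v` will do.
-/

open Cardinal Function Set

universe u v

section LinearAlgebra

variable {K : Type*} {M : Type u} [DivisionRing K] [AddCommGroup M] [Module K M]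

theorem exists_submodule_mem_rank_eq {c : Cardinal} (hc : ℵ₀ ≤ c) (h : c ≤ Module.rank K M)
    (v : M) : ∃ W : Submodule K M, v ∈ W ∧ Module.rank K W = c := by
  obtain ⟨s, hsc, hs⟩ := le_rank_iff_exists_linearIndependent.mp h
  refine ⟨Submodule.span K (insert v s), Submodule.subset_span (mem_insert v s),
    le_antisymm ?_ ?_⟩
  · calc Module.rank K (Submodule.span K (insert v s)) ≤ #(insert v s : Set M) := rank_span_le _
      _ ≤ #s + 1 := mk_insert_le
      _ = c := by rw [hsc, add_one_eq hc]
  · calc c = Module.rank K (Submodule.span K s) := by rw [rank_span_set hs, hsc]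
      _ ≤ _ := Submodule.rank_mono (Submodule.span_mono (subset_insert v s))

theorem Submodule.exists_le_mem_rank_eq {p : Submodule K M} {c : Cardinal} (hc : ℵ₀ ≤ c)
    (h : c ≤ Module.rank K p) {v : M} (hv : v ∈ p) :
    ∃ W ≤ p, v ∈ W ∧ Module.rank K W = c := by
  obtain ⟨W, hvW, hW⟩ := exists_submodule_mem_rank_eq hc h ⟨v, hv⟩
  exact ⟨W.map p.subtype, map_subtype_le p W, ⟨⟨v, hv⟩, hvW, rfl⟩,
    by rw [rank_map_eq p.injective_subtype, hW]⟩

theorem LinearMap.le_rank_ker {V : Type v} [AddCommGroup V] [Module K V] [Module.Finite K V]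
    (f : M →ₗ[K] V) {c : Cardinal} (hc : ℵ₀ ≤ c) (h : c ≤ Module.rank K M) :
    c ≤ Module.rank K (ker f) := by
  by_contra! hlt
  have hrange : lift.{u} (Module.rank K (range f)) < lift.{v} c :=
    (lift_lt_aleph0.mpr ((Submodule.rank_le _).trans_lt (Module.rank_lt_aleph0 K V))).trans_le
      (aleph0_le_lift.mpr hc)
  have hM : lift.{v} (Module.rank K M) < lift.{v} c := by
    rw [← f.lift_rank_range_add_rank_ker]
    exact add_lt_of_lt (aleph0_le_lift.mpr hc) hrange (lift_lt.mpr hlt)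
  exact (lift_lt.mp hM).not_ge h

end LinearAlgebra

theorem linearIndependent_geometric {K : Type*} [Field K] :
    LinearIndependent K (fun t : K => fun n : ℕ => t ^ n) :=
  (linearIndependent_monoidHom (Multiplicative ℕ) K).comp (powersHom K) (powersHom K).injective

section Banach

variable {E : Type*} [NormedAddCommGroup E] [NormedSpace ℝ E] [CompleteSpace E]

theorem linearIndependent_tsum_pow_smul {u : ℕ → E} (hu : ∀ n, ‖u n‖ ≤ 1) (hu0 : ∀ n, u n ≠ 0)
    (P : ℕ → E →L[ℝ] E) (hP : ∀ n k, P n (u k) = if k = n then u k else 0) :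
    LinearIndependent ℝ (fun t : Ioo (0 : ℝ) 1 => ∑' n, (t : ℝ) ^ n • u n) := by
  have hsum (t : Ioo (0 : ℝ) 1) : Summable fun n => (t : ℝ) ^ n • u n := by
    refine .of_norm_bounded (summable_geometric_of_lt_one t.2.1.le t.2.2) fun n => ?_
    rw [norm_smul, norm_pow, Real.norm_of_nonneg t.2.1.le]
    exact mul_le_of_le_one_right (pow_nonneg t.2.1.le n) (hu n)
  have hPy (t : Ioo (0 : ℝ) 1) (n : ℕ) : P n (∑' k, (t : ℝ) ^ k • u k) = (t : ℝ) ^ n • u n := by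
    rw [(P n).map_tsum (hsum t), tsum_eq_single n fun k hk => by simp [hP, hk]]
    simp [hP]
  let Λ : (ℕ → ℝ) →ₗ[ℝ] ℕ → E := LinearMap.pi fun n => (LinearMap.proj n).smulRight (u n)
  have hΛ : LinearMap.ker Λ = ⊥ := by
    refine LinearMap.ker_eq_bot'.mpr fun a ha => funext fun n => ?_
    simpa [Λ, hu0 n] using congrFun ha n
  let Φ : E →ₗ[ℝ] ℕ → E := LinearMap.pi fun n => (P n : E →ₗ[ℝ] E)
  have hΦ : Φ ∘ (fun t : Ioo (0 : ℝ) 1 => ∑' n, (t : ℝ) ^ n • u n) =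
      Λ ∘ (fun t n => t ^ n) ∘ Subtype.val := by
    funext t n
    simp [Φ, Λ, hPy]
  refine LinearIndependent.of_comp Φ ?_
  rw [hΦ]
  exact ((linearIndependent_geometric (K := ℝ)).comp _ Subtype.val_injective).map' Λ hΛ

theorem continuum_le_rank_of_projections {e : ℕ → E} (he : ∀ n, e n ≠ 0) (P : ℕ → E →L[ℝ] E)
    (hP : ∀ n k, P n (e k) = if k = n then e k else 0) : 𝔠 ≤ Module.rank ℝ E := by
  set u : ℕ → E := fun n => ‖e n‖⁻¹ • e n
  have hu : ∀ n, ‖u n‖ = 1 := fun n => norm_smul_inv_norm (he n)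
  have hu0 : ∀ n, u n ≠ 0 := fun n => norm_ne_zero_iff.mp (by rw [hu]; exact one_ne_zero)
  have hPu : ∀ n k, P n (u k) = if k = n then u k else 0 := fun n k => by
    simp only [u, map_smul, hP, smul_ite, smul_zero]
  have := (linearIndependent_tsum_pow_smul (fun n => (hu n).le) hu0 P hPu).cardinal_lift_le_rank
  rwa [mk_Ioo_real zero_lt_one, lift_continuum, lift_uzero] at this

end Banach

section SequenceSpace

variable {X E : Type*} [NormedAddCommGroup X] [NormedSpace ℝ X]
  [NormedAddCommGroup E] [NormedSpace ℝ E]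

theorem exists_clm_coord_apply_eq_smul {coord : E →ₗ[ℝ] ℕ → X} (hinj : Injective coord)
    {α : ℕ → ℝ} {C : ℝ}
    (hmul : ∀ x : E, ∃ y : E, coord y = (fun n => α n • coord x n) ∧ ‖y‖ ≤ C * ‖x‖) :
    ∃ T : E →L[ℝ] E, ∀ x, coord (T x) = fun n => α n • coord x n := by
  choose T hT hTnorm using hmul
  have hadd (x y : E) : T (x + y) = T x + T y := hinj <| by
    simp only [hT, map_add]
    funext n
    simp [smul_add]
  have hsmul (c : ℝ) (x : E) : T (c • x) = c • T x := hinj <| by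
    simp only [hT, map_smul]
    funext n
    exact (smul_comm c (α n) (coord x n)).symm
  exact ⟨LinearMap.mkContinuous ⟨⟨T, hadd⟩, hsmul⟩ C hTnorm, hT⟩

theorem continuum_le_rank_of_sequenceSpace [Nontrivial X] [CompleteSpace E]
    {coord : E →ₗ[ℝ] ℕ → X} (hinj : Injective coord)
    (hc00 : ∀ f : ℕ → X, (support f).Finite → f ∈ range coord)
    (hmul : ∀ (α : ℕ → ℝ) (C : ℝ), (∀ n, |α n| ≤ C) → ∀ x : E,
      ∃ y : E, coord y = (fun n => α n • coord x n) ∧ ‖y‖ ≤ C * ‖x‖) :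
    𝔠 ≤ Module.rank ℝ E := by
  obtain ⟨x₀, hx₀⟩ := exists_ne (0 : X)
  choose e he using fun n =>
    hc00 (Pi.single n x₀) ((finite_singleton n).subset Pi.support_single_subset)
  have hα (n k : ℕ) : |(Pi.single n 1 : ℕ → ℝ) k| ≤ 1 := by
    rcases eq_or_ne k n with rfl | hkn <;> simp [*]
  choose P hP using fun n => exists_clm_coord_apply_eq_smul hinj (hmul _ 1 (hα n))
  refine continuum_le_rank_of_projections (e := e) (fun n hn => hx₀ ?_) P fun n k => hinj ?_
  · simpa [hn] using (congrFun (he n) n).symm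
  · rw [hP, apply_ite coord, he, map_zero]
    funext m
    rcases eq_or_ne k n with rfl | hkn <;> rcases eq_or_ne m k with rfl | hmk <;> simp [*]

end SequenceSpace

section Operators

variable {𝕜 : Type*} {V : Type v} {E : Type u} [NontriviallyNormedField 𝕜]
  [NormedAddCommGroup V] [NormedSpace 𝕜 V] [NormedAddCommGroup E] [NormedSpace 𝕜 E]

variable (V) in
def Submodule.operatorsInto (S : Submodule 𝕜 E) : Submodule 𝕜 (V →L[𝕜] E) where
  carrier := {u | ∀ x, u x ∈ S}
  add_mem' hu hv x := S.add_mem (hu x) (hv x)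
  zero_mem' _ := S.zero_mem
  smul_mem' c _ hu x := S.smul_mem c (hu x)

theorem Submodule.lift_rank_le_rank_operatorsInto [SeparatingDual 𝕜 V] [Nontrivial V]
    (S : Submodule 𝕜 E) :
    lift.{v} (Module.rank 𝕜 S) ≤ Module.rank 𝕜 (S.operatorsInto V) := by
  obtain ⟨x, hx⟩ := exists_ne (0 : V)
  obtain ⟨f, hf⟩ := SeparatingDual.exists_ne_zero (R := 𝕜) hx
  let L : S →ₗ[𝕜] S.operatorsInto V :=
    (f.smulRightₗ ∘ₗ S.subtype).codRestrict _ fun a y => S.smul_mem (f y) a.2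
  have hL : Injective L := fun a b hab => Subtype.ext <|
    smul_right_injective E hf (congrArg (fun u : S.operatorsInto V => u.1 x) hab)
  have := L.lift_rank_le_of_injective hL
  rwa [lift_umax, lift_id' (Module.rank 𝕜 (S.operatorsInto V))] at this

end Operators

theorem stmt7_general {V X E : Type*}
    [NormedAddCommGroup V] [NormedSpace ℝ V] [Nontrivial V]
    [NormedAddCommGroup X] [NormedSpace ℝ X] [Nontrivial X]
    [NormedAddCommGroup E] [NormedSpace ℝ E] [CompleteSpace E]
    (coord : E →ₗ[ℝ] (ℕ → X))
    (hinj : Function.Injective coord)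
    (hc00 : ∀ f : ℕ → X, (Function.support f).Finite → f ∈ Set.range coord)
    (hmul : ∀ (α : ℕ → ℝ) (C : ℝ), (∀ n, |α n| ≤ C) → ∀ x : E,
      ∃ y : E, coord y = (fun n => α n • coord x n) ∧ ‖y‖ ≤ C * ‖x‖)
    (v : V →L[ℝ] E) (hsurj : ¬ Function.Surjective ⇑v) :
    ∃ W : Submodule ℝ (V →L[ℝ] E),
      Module.rank ℝ W = Cardinal.continuum ∧ v ∈ W ∧
      ∀ u ∈ W, u ≠ 0 → ¬ Function.Surjective ⇑u := by
  obtain ⟨y₀, hy₀⟩ : ∃ y₀, y₀ ∉ LinearMap.range (v : V →ₗ[ℝ] E) := by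
    simpa [Surjective] using hsurj
  obtain ⟨g, hgy₀, hgv⟩ := Submodule.exists_dual_map_eq_bot_of_notMem hy₀ inferInstance
  set S := LinearMap.ker g
  have hvS : v ∈ S.operatorsInto V := fun x =>
    LinearMap.le_ker_iff_map.mpr hgv (LinearMap.mem_range_self _ x)
  have hS : 𝔠 ≤ Module.rank ℝ (S.operatorsInto V) :=
    (continuum_le_lift.mpr <| g.le_rank_ker aleph0_le_continuum <|
      continuum_le_rank_of_sequenceSpace hinj hc00 hmul).trans S.lift_rank_le_rank_operatorsInto
  obtain ⟨W, hWS, hvW, hW⟩ := Submodule.exists_le_mem_rank_eq aleph0_le_continuum hS hvS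
  refine ⟨W, hW, hvW, fun u hu _ hsu => hgy₀ ?_⟩
  obtain ⟨x, rfl⟩ := hsu y₀
  exact hWS hu x

/-- For V ≠ {0} normed, X ≠ {0} Banach and E a reasonable sequence space of
X-valued sequences, the set of non-surjective continuous linear operators V → E is
(1, 𝔠)-lineable. -/
theorem stmt7 {V X E : Type*}
    [NormedAddCommGroup V] [NormedSpace ℝ V] [Nontrivial V]
    [NormedAddCommGroup X] [NormedSpace ℝ X] [CompleteSpace X] [Nontrivial X]
    [NormedAddCommGroup E] [NormedSpace ℝ E] [CompleteSpace E]
    (coord : E →ₗ[ℝ] (ℕ → X))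
    (hinj : Function.Injective coord)
    (hc00 : ∀ f : ℕ → X, (Function.support f).Finite → f ∈ Set.range coord)
    (hmul : ∀ (α : ℕ → ℝ) (C : ℝ), (∀ n, |α n| ≤ C) → ∀ x : E,
      ∃ y : E, coord y = (fun n => α n • coord x n) ∧ ‖y‖ ≤ C * ‖x‖)
    (v : V →L[ℝ] E) (hv : v ≠ 0) (hsurj : ¬ Function.Surjective ⇑v) :
    ∃ W : Submodule ℝ (V →L[ℝ] E),
      Module.rank ℝ W = Cardinal.continuum ∧ v ∈ W ∧
      ∀ u ∈ W, u ≠ 0 → ¬ Function.Surjective ⇑u :=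
  stmt7_general coord hinj hc00 hmul v hsurj
end

section
/- Let V ≠ {0} be a normed vector space, X ≠ {0} a Banach space, and E a reasonable sequence space of X-valued sequences. The set C_{V,E} = {u : V → E : u linear, continuous, non-surjective and non-injective} is (1, 𝔠)-lineable: for every nonzero v ∈ C_{V,E} there is a subspace W of L(V, E) of dimension 𝔠 with v ∈ W ⊆ C_{V,E} ∪ {0}. -/
/-!
Pick `w ≠ 0` with `v w = 0` and let `S` be the set of coordinates reached by the range of `v`.
The diagonal multipliers `D_t : (x_n) ↦ (tⁿ x_n)`, `0 < t ≤ 1`, act on `E`, and for an operator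
`T` whose range reaches infinitely many coordinates the `D_t ∘ T` are linearly independent,
because a nontrivial combination `∑ c_t tⁿ` of distinct geometric sequences has only finitely
many zeros. Together with `v` they span a space of dimension `𝔠`.

If `S` is infinite take `T = v`: every combination is a bounded diagonal multiple `D_β ∘ v`, so it
kills `w`, and it is not surjective, since either some `β_n = 0`, or `D_β` is injective and
surjectivity would pass to `v`. If `S` is finite take `n₁ ∉ S` and `T = (φ ∘ v) ⊗ z'` with
`φ ∘ v ≠ 0` and `z'` supported exactly on `Sᶜ \ {n₁}` (cut out of a full-support element built
as a convergent series); then every combination kills `w` and misses the coordinate `n₁`.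
-/

open Set Filter Topology Cardinal

universe u₁ u₂

theorem eq_zero_of_frequently_sum_mul_pow_eq_zero {κ : Type*} {t : κ → ℝ}
    (ht : Function.Injective t) (hpos : ∀ k, 0 < t k) (s : Finset κ) :
    ∀ c : κ → ℝ, (∃ᶠ n in atTop, ∑ k ∈ s, c k * t k ^ n = 0) → ∀ k ∈ s, c k = 0 := by
  classical
  induction s using Finset.induction_on_max_value t with
  | empty => simp
  | insert a s has hmax ih =>
    intro c hc
    have hsmall : ∀ k ∈ s, Tendsto (fun n : ℕ => (t k / t a) ^ n) atTop (𝓝 0) := fun k hk =>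
      tendsto_pow_atTop_nhds_zero_of_lt_one (div_nonneg (hpos k).le (hpos a).le)
        ((div_lt_one (hpos a)).2 <| (hmax k hk).lt_of_ne <| ht.ne <| by rintro rfl; exact has hk)
    -- dividing by the dominant term `t a ^ n` isolates the coefficient `c a`
    have hlim : Tendsto (fun n : ℕ => (∑ k ∈ insert a s, c k * t k ^ n) / t a ^ n) atTop
        (𝓝 (c a)) := by
      have hsum : Tendsto (fun n : ℕ => c a + ∑ k ∈ s, c k * (t k / t a) ^ n) atTop
          (𝓝 (c a + ∑ k ∈ s, c k * 0)) :=
        tendsto_const_nhds.add <| tendsto_finsetSum s fun k hk => (hsmall k hk).const_mul _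
      simp only [mul_zero, Finset.sum_const_zero, add_zero] at hsum
      refine hsum.congr fun n => ?_
      have : t a ^ n ≠ 0 := pow_ne_zero n (hpos a).ne'
      rw [Finset.sum_insert has, add_div, Finset.sum_div, mul_div_cancel_right₀ _ this]
      simp only [div_pow, mul_div_assoc]
    have hca : c a = 0 := tendsto_nhds_unique_of_frequently_eq hlim tendsto_const_nhds <|
      hc.mono fun n hn => by rw [hn, zero_div]
    have hcs : ∀ k ∈ s, c k = 0 := ih c <| hc.mono fun n hn => by
      rwa [Finset.sum_insert has, hca, zero_mul, zero_add] at hn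
    simpa [hca] using hcs

theorem linearIndependent_pow_smul {κ ι X : Type*} [AddCommGroup X] [Module ℝ X]
    {t : κ → ℝ} (ht : Function.Injective t) (hpos : ∀ k, 0 < t k) (a : ι → ℕ → X)
    (ha : {n | ∃ i, a i n ≠ 0}.Infinite) :
    LinearIndependent ℝ (fun k i n => t k ^ n • a i n) := by
  rw [linearIndependent_iff']
  intro s c hsum
  refine eq_zero_of_frequently_sum_mul_pow_eq_zero ht hpos s c <|
    Nat.frequently_atTop_iff_infinite.2 <| ha.mono ?_
  rintro n ⟨i, hi⟩
  have hin := congrFun (congrFun hsum i) n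
  simp only [Finset.sum_apply, Pi.smul_apply, smul_smul, ← Finset.sum_smul,
    Pi.zero_apply] at hin
  exact (smul_eq_zero.1 hin).resolve_right hi

theorem rank_span_insert_range_eq_continuum {ι : Type u₁} {M : Type u₂}
    [AddCommGroup M] [Module ℝ M]
    {u : ι → M} (hu : LinearIndependent ℝ u) (hι : #ι = 𝔠) (v : M) :
    Module.rank ℝ (Submodule.span ℝ (insert v (range u))) = 𝔠 := by
  have hrange : #(range u) = 𝔠 := by
    have h := mk_range_eq_of_injective hu.injective
    rwa [hι, lift_continuum, ← lift_continuum.{u₁, u₂}, lift_inj] at h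
  apply le_antisymm
  · calc Module.rank ℝ (Submodule.span ℝ (insert v (range u)))
        ≤ #(insert v (range u) : Set M) := rank_span_le _
      _ ≤ #(range u) + 1 := mk_insert_le
      _ = 𝔠 := by rw [hrange, add_one_eq aleph0_le_continuum]
  · calc 𝔠 = Module.rank ℝ (Submodule.span ℝ (range u)) := ((rank_span hu).trans hrange).symm
      _ ≤ _ := Submodule.rank_mono (Submodule.span_mono (subset_insert _ _))

theorem abs_pow_le_one_of_mem_Ioc (t : Ioc (0 : ℝ) 1) (n : ℕ) : |(t : ℝ) ^ n| ≤ 1 := by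
  rw [abs_pow, abs_of_pos t.2.1]
  exact pow_le_one₀ t.2.1.le t.2.2

section Operators

variable {V X E : Type*} [NormedAddCommGroup V] [NormedSpace ℝ V] [AddCommGroup X] [Module ℝ X]
  [NormedAddCommGroup E] [NormedSpace ℝ E]

def diagonalMultiples (coord : E →ₗ[ℝ] (ℕ → X)) (v : V →L[ℝ] E) :
    Submodule ℝ (V →L[ℝ] E) where
  carrier := {u | ∃ β : ℕ → ℝ, (∃ C, ∀ n, |β n| ≤ C) ∧
    ∀ x, coord (u x) = fun n => β n • coord (v x) n}
  zero_mem' := ⟨0, ⟨0, by simp⟩, fun x => by funext n; simp⟩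
  add_mem' := by
    rintro u u' ⟨β, ⟨C, hC⟩, hu⟩ ⟨β', ⟨C', hC'⟩, hu'⟩
    refine ⟨β + β', ⟨C + C', fun n => (abs_add_le _ _).trans (add_le_add (hC n) (hC' n))⟩,
      fun x => ?_⟩
    funext n
    simp [hu, hu', add_smul]
  smul_mem' := by
    rintro r u ⟨β, ⟨C, hC⟩, hu⟩
    refine ⟨r • β, ⟨|r| * C, fun n => ?_⟩, fun x => ?_⟩
    · rw [Pi.smul_apply, smul_eq_mul, abs_mul]
      exact mul_le_mul_of_nonneg_left (hC n) (abs_nonneg r)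
    · funext n
      simp [hu, mul_smul]

def opsVanishingAtMissingCoord (coord : E →ₗ[ℝ] (ℕ → X)) (w : V) (n : ℕ) :
    Submodule ℝ (V →L[ℝ] E) where
  carrier := {u | u w = 0 ∧ ∀ x, coord (u x) n = 0}
  zero_mem' := by simp
  add_mem' := by
    rintro u u' ⟨hw, hn⟩ ⟨hw', hn'⟩
    simp [hw, hw', hn, hn']
  smul_mem' := by
    rintro r u ⟨hw, hn⟩
    simp [hw, hn]

end Operators

structure ReasonableSeqSpace {X E : Type*} [AddCommGroup X] [Module ℝ X]
    [NormedAddCommGroup E] [NormedSpace ℝ E] (coord : E →ₗ[ℝ] (ℕ → X)) : Prop where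
  injective : Function.Injective coord
  finite_support_mem_range : ∀ f : ℕ → X, (Function.support f).Finite → f ∈ Set.range coord
  exists_mul : ∀ (α : ℕ → ℝ) (C : ℝ), (∀ n, |α n| ≤ C) → ∀ x : E,
    ∃ y : E, coord y = (fun n => α n • coord x n) ∧ ‖y‖ ≤ C * ‖x‖

namespace ReasonableSeqSpace

variable {V X E : Type*} [NormedAddCommGroup V] [NormedSpace ℝ V] [AddCommGroup X] [Module ℝ X]
  [NormedAddCommGroup E] [NormedSpace ℝ E] {coord : E →ₗ[ℝ] (ℕ → X)}
  (hE : ReasonableSeqSpace coord)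
include hE

noncomputable def mul (β : ℕ → ℝ) {C : ℝ} (hβ : ∀ n, |β n| ≤ C) : E →L[ℝ] E :=
  LinearMap.mkContinuous
    { toFun := fun x => (hE.exists_mul β C hβ x).choose
      map_add' := fun x y => hE.injective <| by
        have h z := (hE.exists_mul β C hβ z).choose_spec.1
        conv_rhs => rw [map_add, h, h]
        rw [h]
        funext n
        simp only [map_add, Pi.add_apply, smul_add]
      map_smul' := fun r x => hE.injective <| by
        have h z := (hE.exists_mul β C hβ z).choose_spec.1
        conv_rhs => rw [map_smul, h]
        rw [h]
        funext n
        simp only [map_smul, Pi.smul_apply, RingHom.id_apply, smul_comm r] }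
    C fun x => (hE.exists_mul β C hβ x).choose_spec.2

theorem coord_mul (β : ℕ → ℝ) {C : ℝ} (hβ : ∀ n, |β n| ≤ C) (x : E) :
    coord (hE.mul β hβ x) = fun n => β n • coord x n :=
  (hE.exists_mul β C hβ x).choose_spec.1

noncomputable def powMul (t : Ioc (0 : ℝ) 1) : E →L[ℝ] E :=
  hE.mul (fun n => (t : ℝ) ^ n) (abs_pow_le_one_of_mem_Ioc t)

theorem coord_powMul (t : Ioc (0 : ℝ) 1) (x : E) :
    coord (hE.powMul t x) = fun n => (t : ℝ) ^ n • coord x n :=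
  hE.coord_mul _ _ x

-- `coord` need not be continuous, but the projection onto coordinate `n` is a multiplier
theorem coord_tsum_apply_eq_single {ι : Type*} {f : ι → E} (hf : Summable f) (n : ℕ) (m : ι)
    (hfm : ∀ k ≠ m, coord (f k) n = 0) : coord (∑' k, f k) n = coord (f m) n := by
  have hbound : ∀ j, |(Pi.single n 1 : ℕ → ℝ) j| ≤ 1 := fun j => by
    by_cases h : j = n <;> simp [h]
  set P := hE.mul (Pi.single n 1) hbound
  have hP : ∀ x, coord (P x) n = coord x n := fun x => by simp [P, hE.coord_mul]
  have hP0 : ∀ x, coord x n = 0 → P x = 0 := fun x hx => hE.injective <| by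
    funext j
    by_cases h : j = n
    · subst h; simp [hP, hx]
    · simp [P, hE.coord_mul, h]
  rw [← hP, P.map_tsum hf, tsum_eq_single m fun k hk => hP0 _ (hfm k hk), hP]

theorem exists_forall_coord_ne_zero [Nontrivial X] [CompleteSpace E] :
    ∃ z : E, ∀ n, coord z n ≠ 0 := by
  obtain ⟨x₀, hx₀⟩ := exists_ne (0 : X)
  have hsingle : ∀ n, ∃ e : E, coord e = Pi.single n x₀ := fun n =>
    hE.finite_support_mem_range _ ((finite_singleton n).subset Pi.support_single_subset)
  choose e he using hsingle
  have hne : ∀ n, e n ≠ 0 := fun n h => hx₀ <| by simpa [h] using (congrFun (he n) n).symm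
  set c : ℕ → ℝ := fun n => (2 ^ n * ‖e n‖)⁻¹
  have hsum : Summable fun n => c n • e n := by
    refine Summable.of_norm_bounded summable_geometric_two fun n => le_of_eq ?_
    have := norm_ne_zero_iff.2 (hne n)
    simp only [c, norm_smul, norm_inv, norm_mul, norm_pow, Real.norm_ofNat, norm_norm]
    field_simp
    rw [← mul_pow]
    norm_num
  refine ⟨∑' n, c n • e n, fun n => ?_⟩
  rw [hE.coord_tsum_apply_eq_single hsum n n fun k hk => by simp [he, hk.symm]]
  simpa [he, c, hne n] using hx₀

theorem linearIndependent_powMul_comp {T : V →L[ℝ] E}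
    (hT : {n | ∃ x, coord (T x) n ≠ 0}.Infinite) :
    LinearIndependent ℝ fun t => (hE.powMul t).comp T := by
  let Ψ : (V →L[ℝ] E) →ₗ[ℝ] (V → ℕ → X) :=
    LinearMap.pi fun x => coord ∘ₗ (ContinuousLinearMap.apply ℝ E x).toLinearMap
  have hΨ : Ψ ∘ (fun t => (hE.powMul t).comp T) =
      fun (t : Ioc (0 : ℝ) 1) x n => (t : ℝ) ^ n • coord (T x) n := by
    funext t x n
    simp [Ψ, hE.coord_powMul]
  refine LinearIndependent.of_comp Ψ ?_
  rw [hΨ]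
  exact linearIndependent_pow_smul Subtype.val_injective (fun t => t.2.1) _ hT

theorem exists_rank_eq_continuum_le {v T : V →L[ℝ] E}
    (hT : {n | ∃ x, coord (T x) n ≠ 0}.Infinite) {G : Submodule ℝ (V →L[ℝ] E)} (hvG : v ∈ G)
    (hTG : ∀ t, (hE.powMul t).comp T ∈ G) :
    ∃ W : Submodule ℝ (V →L[ℝ] E), Module.rank ℝ W = 𝔠 ∧ v ∈ W ∧ W ≤ G :=
  ⟨_, rank_span_insert_range_eq_continuum (hE.linearIndependent_powMul_comp hT)
      (mk_Ioc_real zero_lt_one) v,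
    Submodule.subset_span (mem_insert v _),
    Submodule.span_le.2 (insert_subset hvG (range_subset_iff.2 hTG))⟩

theorem apply_eq_zero_of_mem_diagonalMultiples {v u : V →L[ℝ] E} {w : V} (hvw : v w = 0)
    (hu : u ∈ diagonalMultiples coord v) : u w = 0 := by
  obtain ⟨β, -, hu⟩ := hu
  exact hE.injective <| funext fun n => by simp [hu, hvw]

theorem not_surjective_of_mem_diagonalMultiples {z : E} (hz : ∀ n, coord z n ≠ 0)
    {v u : V →L[ℝ] E} (hv : ¬ Function.Surjective v) (hu : u ∈ diagonalMultiples coord v) :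
    ¬ Function.Surjective u := by
  obtain ⟨β, ⟨C, hC⟩, hu⟩ := hu
  intro hsurj
  by_cases hβ : ∃ n, β n = 0
  · obtain ⟨n, hn⟩ := hβ
    obtain ⟨x, rfl⟩ := hsurj z
    exact hz n (by simp [hu, hn])
  · simp only [not_exists] at hβ
    refine hv fun y => ?_
    obtain ⟨x, hx⟩ := hsurj (hE.mul β hC y)
    refine ⟨x, hE.injective (funext fun n => smul_right_injective X (hβ n) ?_)⟩
    simpa [hu, hE.coord_mul] using congrFun (congrArg coord hx) n

theorem exists_of_infinite_support {z : E} (hz : ∀ n, coord z n ≠ 0) {v : V →L[ℝ] E} {w : V}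
    (hv : ¬ Function.Surjective v) (hvw : v w = 0)
    (hS : {n | ∃ x, coord (v x) n ≠ 0}.Infinite) :
    ∃ W : Submodule ℝ (V →L[ℝ] E), Module.rank ℝ W = 𝔠 ∧ v ∈ W ∧
      ∀ u ∈ W, u w = 0 ∧ ¬ Function.Surjective u := by
  obtain ⟨W, hW, hvW, hWG⟩ := hE.exists_rank_eq_continuum_le hS
    (v := v) (G := diagonalMultiples coord v)
    ⟨1, ⟨1, by simp⟩, fun x => by simp⟩
    fun t => ⟨_, ⟨1, abs_pow_le_one_of_mem_Ioc t⟩, fun x => hE.coord_powMul t (v x)⟩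
  exact ⟨W, hW, hvW, fun u hu => ⟨hE.apply_eq_zero_of_mem_diagonalMultiples hvw (hWG hu),
    hE.not_surjective_of_mem_diagonalMultiples hz hv (hWG hu)⟩⟩

theorem exists_of_finite_support {z : E} (hz : ∀ n, coord z n ≠ 0) {v : V →L[ℝ] E} {w : V}
    (hv : v ≠ 0) (hvw : v w = 0) (hS : {n | ∃ x, coord (v x) n ≠ 0}.Finite) :
    ∃ W : Submodule ℝ (V →L[ℝ] E), Module.rank ℝ W = 𝔠 ∧ v ∈ W ∧
      ∀ u ∈ W, u w = 0 ∧ ¬ Function.Surjective u := by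
  obtain ⟨n₁, hn₁⟩ := hS.infinite_compl.nonempty
  set M := {n | ∃ x, coord (v x) n ≠ 0}ᶜ \ {n₁}
  have hM : M.Infinite := hS.infinite_compl.sdiff (finite_singleton n₁)
  obtain ⟨x₁, hx₁⟩ := ContinuousLinearMap.exists_ne_zero hv
  obtain ⟨φ, hφ⟩ := SeparatingDual.exists_ne_zero (R := ℝ) hx₁
  have hbound : ∀ n, |M.indicator 1 n| ≤ (1 : ℝ) := fun n => by
    by_cases h : n ∈ M <;> simp [h]
  set T := (φ.comp v).smulRight (hE.mul (M.indicator 1) hbound z)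
  have hcoordT : ∀ x n, coord (T x) n = φ (v x) • M.indicator (1 : ℕ → ℝ) n • coord z n :=
    fun x n => by simp [T, hE.coord_mul]
  have hT : {n | ∃ x, coord (T x) n ≠ 0}.Infinite :=
    hM.mono fun n hn => ⟨x₁, by simp [hcoordT, hn, hφ, hz n]⟩
  obtain ⟨W, hW, hvW, hWG⟩ := hE.exists_rank_eq_continuum_le hT
    (G := opsVanishingAtMissingCoord coord w n₁)
    ⟨hvw, fun x => not_not.1 fun h => hn₁ ⟨x, h⟩⟩
    fun t => ⟨by simp [T, hvw], fun x => by simp [hE.coord_powMul, hcoordT, M]⟩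
  refine ⟨W, hW, hvW, fun u hu => ⟨(hWG hu).1, fun hsurj => ?_⟩⟩
  obtain ⟨x, rfl⟩ := hsurj z
  exact hz n₁ ((hWG hu).2 x)

end ReasonableSeqSpace

theorem stmt14_general {V X E : Type*}
    [NormedAddCommGroup V] [NormedSpace ℝ V]
    [NormedAddCommGroup X] [NormedSpace ℝ X] [Nontrivial X]
    [NormedAddCommGroup E] [NormedSpace ℝ E] [CompleteSpace E]
    (coord : E →ₗ[ℝ] (ℕ → X))
    (hinj : Function.Injective coord)
    (hc00 : ∀ f : ℕ → X, (Function.support f).Finite → f ∈ Set.range coord)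
    (hmul : ∀ (α : ℕ → ℝ) (C : ℝ), (∀ n, |α n| ≤ C) → ∀ x : E,
      ∃ y : E, coord y = (fun n => α n • coord x n) ∧ ‖y‖ ≤ C * ‖x‖)
    (v : V →L[ℝ] E) (hv : v ≠ 0)
    (hsurj : ¬ Function.Surjective ⇑v) (hninj : ¬ Function.Injective ⇑v) :
    ∃ W : Submodule ℝ (V →L[ℝ] E),
      Module.rank ℝ W = Cardinal.continuum ∧ v ∈ W ∧
      ∀ u ∈ W, u ≠ 0 → ¬ Function.Surjective ⇑u ∧ ¬ Function.Injective ⇑u := by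
  have hE : ReasonableSeqSpace coord := ⟨hinj, hc00, hmul⟩
  obtain ⟨z, hz⟩ := hE.exists_forall_coord_ne_zero
  obtain ⟨a, b, hab, hne⟩ := Function.not_injective_iff.1 hninj
  have hvw : v (a - b) = 0 := by rw [map_sub, hab, sub_self]
  obtain ⟨W, hW, hvW, hWG⟩ := (em {n | ∃ x, coord (v x) n ≠ 0}.Infinite).elim
    (hE.exists_of_infinite_support hz hsurj hvw)
    fun hS => hE.exists_of_finite_support hz hv hvw (not_infinite.1 hS)
  refine ⟨W, hW, hvW, fun u hu _ => ⟨(hWG u hu).2, fun hu_inj => hne ?_⟩⟩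
  exact sub_eq_zero.1 (hu_inj ((hWG u hu).1.trans (map_zero u).symm))

/-- For V ≠ {0} normed, X ≠ {0} Banach and E a reasonable sequence space,
the set of continuous linear operators V → E that are both non-surjective and
non-injective is (1, 𝔠)-lineable. -/
theorem stmt14 {V X E : Type*}
    [NormedAddCommGroup V] [NormedSpace ℝ V] [Nontrivial V]
    [NormedAddCommGroup X] [NormedSpace ℝ X] [CompleteSpace X] [Nontrivial X]
    [NormedAddCommGroup E] [NormedSpace ℝ E] [CompleteSpace E]
    (coord : E →ₗ[ℝ] (ℕ → X))
    (hinj : Function.Injective coord)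
    (hc00 : ∀ f : ℕ → X, (Function.support f).Finite → f ∈ Set.range coord)
    (hmul : ∀ (α : ℕ → ℝ) (C : ℝ), (∀ n, |α n| ≤ C) → ∀ x : E,
      ∃ y : E, coord y = (fun n => α n • coord x n) ∧ ‖y‖ ≤ C * ‖x‖)
    (v : V →L[ℝ] E) (hv : v ≠ 0)
    (hsurj : ¬ Function.Surjective ⇑v) (hninj : ¬ Function.Injective ⇑v) :
    ∃ W : Submodule ℝ (V →L[ℝ] E),
      Module.rank ℝ W = Cardinal.continuum ∧ v ∈ W ∧
      ∀ u ∈ W, u ≠ 0 → ¬ Function.Surjective ⇑u ∧ ¬ Function.Injective ⇑u :=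
  stmt14_general coord hinj hc00 hmul v hv hsurj hninj
end
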